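/- Let X be a Banach space with modulus of uniform convexity η : (0,2] → (0,1], let b > 0, let C ⊆ X be a nonempty closed convex set with C ⊆ {x : ‖x‖ ≤ b/2}, and let T : C → C be nonexpansive. Define η₁(0) := 0, η₁(ε) := sup{η(ε') : 0 < ε' ≤ min{2, ε}}, η̃(ε) := (1/2)·∫₀^ε η₁(t) dt, and γ(ε) := (b/2)·η̃(4ε/b). Then T is of type (γ): for all x₁, x₂ ∈ C and all λ ∈ [0,1], γ(‖T(λx₁ + (1−λ)x₂) − (λTx₁ + (1−λ)Tx₂)‖) ≤ ‖x₁ − x₂‖ − ‖Tx₁ − Tx₂‖. -/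
import Mathlib


/-- `η₁(ε) := sup {η(ε') : 0 < ε' ≤ min 2 ε}` for `ε > 0`, and `η₁(ε) := 0` otherwise. -/
noncomputable def eta1 (η : ℝ → ℝ) (ε : ℝ) : ℝ :=
  if 0 < ε then sSup {y : ℝ | ∃ ε' : ℝ, 0 < ε' ∧ ε' ≤ min 2 ε ∧ y = η ε'} else 0

/-- `η̃(ε) := (1/2)·∫₀^ε η₁(t) dt`. -/
noncomputable def etaTilde (η : ℝ → ℝ) (ε : ℝ) : ℝ :=
  (1 / 2) * ∫ t in (0 : ℝ)..ε, eta1 η t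

/-- `γ(ε) := (b/2)·η̃(4ε/b)`. -/
noncomputable def gammaFun (η : ℝ → ℝ) (b : ℝ) (ε : ℝ) : ℝ :=
  (b / 2) * etaTilde η (4 * ε / b)

lemma eta1_bddAbove (η : ℝ → ℝ)
    (hη_range : ∀ ε : ℝ, 0 < ε → ε ≤ 2 → 0 < η ε ∧ η ε ≤ 1) (ε : ℝ) :
    (1 : ℝ) ∈ upperBounds {y : ℝ | ∃ ε' : ℝ, 0 < ε' ∧ ε' ≤ min 2 ε ∧ y = η ε'} := by
  rintro y ⟨ε', h1, h2, rfl⟩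
  exact (hη_range ε' h1 (h2.trans (min_le_left _ _))).2

lemma eta1_nonneg (η : ℝ → ℝ)
    (hη_range : ∀ ε : ℝ, 0 < ε → ε ≤ 2 → 0 < η ε ∧ η ε ≤ 1) (ε : ℝ) :
    0 ≤ eta1 η ε := by
  unfold eta1
  split_ifs with h
  · have hmem : η (min 2 ε) ∈ {y : ℝ | ∃ ε' : ℝ, 0 < ε' ∧ ε' ≤ min 2 ε ∧ y = η ε'} :=
      ⟨min 2 ε, lt_min two_pos h, le_refl _, rfl⟩
    have := le_csSup ⟨1, eta1_bddAbove η hη_range ε⟩ hmem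
    have hpos := (hη_range (min 2 ε) (lt_min two_pos h) (min_le_left _ _)).1
    linarith
  · exact le_refl 0

lemma eta1_mono (η : ℝ → ℝ)
    (hη_range : ∀ ε : ℝ, 0 < ε → ε ≤ 2 → 0 < η ε ∧ η ε ≤ 1) :
    Monotone (eta1 η) := by
  intro s t hst
  by_cases hs : 0 < s
  · have ht : 0 < t := lt_of_lt_of_le hs hst
    unfold eta1
    rw [if_pos hs, if_pos ht]
    apply csSup_le_csSup ⟨1, eta1_bddAbove η hη_range t⟩
    · exact ⟨η (min 2 s), min 2 s, lt_min two_pos hs, le_refl _, rfl⟩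
    · rintro y ⟨ε', h1, h2, rfl⟩
      exact ⟨ε', h1, h2.trans (min_le_min (le_refl 2) hst), rfl⟩
  · have : eta1 η s = 0 := by unfold eta1; rw [if_neg hs]
    rw [this]
    exact eta1_nonneg η hη_range t

set_option maxHeartbeats 1000000 in
/-- essentially Bruck: a nonexpansive map `T` on a bounded closed
convex subset of a uniformly convex Banach space is of type (γ). -/
theorem nonexpansive_is_type_gamma
    {X : Type*} [NormedAddCommGroup X] [NormedSpace ℝ X] [CompleteSpace X]
    (η : ℝ → ℝ)
    (hη_range : ∀ ε : ℝ, 0 < ε → ε ≤ 2 → 0 < η ε ∧ η ε ≤ 1)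
    (hη_mod : ∀ ε : ℝ, 0 < ε → ε ≤ 2 → ∀ x y : X, ‖x‖ ≤ 1 → ‖y‖ ≤ 1 →
      ε ≤ ‖x - y‖ → ‖x + y‖ / 2 ≤ 1 - η ε)
    (b : ℝ) (hb : 0 < b)
    (C : Set X) (hCne : C.Nonempty) (hCcl : IsClosed C) (hCcv : Convex ℝ C)
    (hCb : ∀ x ∈ C, ‖x‖ ≤ b / 2)
    (T : X → X) (hTmaps : ∀ x ∈ C, T x ∈ C)
    (hTne : ∀ x ∈ C, ∀ y ∈ C, ‖T x - T y‖ ≤ ‖x - y‖) :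
    ∀ x₁ ∈ C, ∀ x₂ ∈ C, ∀ lam : ℝ, 0 ≤ lam → lam ≤ 1 →
      gammaFun η b ‖T (lam • x₁ + (1 - lam) • x₂) -
          (lam • T x₁ + (1 - lam) • T x₂)‖ ≤
        ‖x₁ - x₂‖ - ‖T x₁ - T x₂‖ := by
  intro x₁ hx₁ x₂ hx₂ lam hlam0 hlam1
  set z := lam • x₁ + (1 - lam) • x₂ with hz_def
  have hzC : z ∈ C := hCcv hx₁ hx₂ hlam0 (by linarith) (by ring)
  set d := ‖x₁ - x₂‖ with hd_def
  set d' := ‖T x₁ - T x₂‖ with hd'_def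
  set a := T z - T x₁ with ha_def
  set c := T z - T x₂ with hc_def
  have hd'd : d' ≤ d := hTne x₁ hx₁ x₂ hx₂
  have hd0 : 0 ≤ d := norm_nonneg _
  have hwform : T z - (lam • T x₁ + (1 - lam) • T x₂) = lam • a + (1 - lam) • c := by
    rw [ha_def, hc_def]; module
  rw [hwform]
  set w := lam • a + (1 - lam) • c with hw_def
  have ha_le : ‖a‖ ≤ (1 - lam) * d := by
    have h1 : ‖a‖ ≤ ‖z - x₁‖ := hTne z hzC x₁ hx₁
    have h2 : z - x₁ = (1 - lam) • (x₂ - x₁) := by rw [hz_def]; module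
    rw [h2, norm_smul, Real.norm_eq_abs, abs_of_nonneg (by linarith), ← norm_neg (x₂ - x₁)] at h1
    simpa using h1
  have hc_le : ‖c‖ ≤ lam * d := by
    have h1 : ‖c‖ ≤ ‖z - x₂‖ := hTne z hzC x₂ hx₂
    have h2 : z - x₂ = lam • (x₁ - x₂) := by rw [hz_def]; module
    rwa [h2, norm_smul, Real.norm_eq_abs, abs_of_nonneg hlam0] at h1
  have hw_le : ‖w‖ ≤ 2 * (lam * (1 - lam)) * d := by
    calc ‖w‖ ≤ ‖lam • a‖ + ‖(1 - lam) • c‖ := norm_add_le _ _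
      _ = lam * ‖a‖ + (1 - lam) * ‖c‖ := by
          rw [norm_smul, norm_smul, Real.norm_eq_abs, Real.norm_eq_abs,
            abs_of_nonneg hlam0, abs_of_nonneg (by linarith)]
      _ ≤ lam * ((1 - lam) * d) + (1 - lam) * (lam * d) := by
          have h1 : lam * ‖a‖ ≤ lam * ((1 - lam) * d) :=
            mul_le_mul_of_nonneg_left ha_le hlam0
          have h2 : (1 - lam) * ‖c‖ ≤ (1 - lam) * (lam * d) :=
            mul_le_mul_of_nonneg_left hc_le (by linarith)
          linarith
      _ = 2 * (lam * (1 - lam)) * d := by ring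
  by_cases hw0 : ‖w‖ = 0
  · rw [hw0]
    have : gammaFun η b 0 = 0 := by
      simp [gammaFun, etaTilde]
    rw [this]
    linarith
  have hwpos : 0 < ‖w‖ := lt_of_le_of_ne (norm_nonneg _) (Ne.symm hw0)
  clear_value z d d' a c w
  set μ := lam * (1 - lam) with hμ_def
  clear_value μ
  have hμd_pos : 0 < μ * d := by nlinarith
  have hμ_pos : 0 < μ := by nlinarith
  have hd_pos : 0 < d := by nlinarith
  have hlam_pos : 0 < lam := by nlinarith
  have hlam_lt : lam < 1 := by nlinarith
  have h2μd : (0:ℝ) < 2 * μ * d :=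
    mul_pos (mul_pos (by norm_num : (0:ℝ) < 2) hμ_pos) hd_pos
  set t := ‖w‖ / (μ * d) with ht_def
  clear_value t
  have ht_pos : 0 < t := by rw [ht_def]; exact div_pos hwpos hμd_pos
  set x := ((1 - lam) * d)⁻¹ • a with hx_def
  set y := -((lam * d)⁻¹ • c) with hy_def
  clear_value x y
  have h1ld : 0 < (1 - lam) * d := by nlinarith
  have hld : 0 < lam * d := by nlinarith
  have hx1 : ‖x‖ ≤ 1 := by
    rw [hx_def, norm_smul, Real.norm_eq_abs, abs_of_pos (inv_pos.2 h1ld)]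
    rw [inv_mul_le_iff₀ h1ld]
    simpa using ha_le
  have hy1 : ‖y‖ ≤ 1 := by
    rw [hy_def, norm_neg, norm_smul, Real.norm_eq_abs, abs_of_pos (inv_pos.2 hld)]
    rw [inv_mul_le_iff₀ hld]
    simpa using hc_le
  have hlam_ne : lam ≠ 0 := ne_of_gt hlam_pos
  have h1lam_ne : (1 : ℝ) - lam ≠ 0 := by linarith
  have hd_ne : d ≠ 0 := ne_of_gt hd_pos
  have hs1 : (μ * d) • x = lam • a := by
    rw [hx_def, smul_smul]
    congr 1
    rw [hμ_def]
    field_simp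
  have hs2 : (μ * d) • y = (-(1 - lam)) • c := by
    rw [hy_def, smul_neg, smul_smul, ← neg_smul]
    congr 1
    rw [hμ_def]
    field_simp
  have hw_eq : w = (μ * d) • (x - y) := by
    rw [smul_sub, hs1, hs2, hw_def]
    module
  have hnormxy : ‖x - y‖ = t := by
    rw [ht_def, hw_eq, norm_smul, Real.norm_eq_abs, abs_of_pos hμd_pos,
      mul_div_cancel_left₀ _ (ne_of_gt hμd_pos)]
  have hx_s : d • ((1 - lam) • x) = a := by
    rw [hx_def]
    match_scalars
    field_simp
  have hy_s : d • (lam • y) = -c := by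
    rw [hy_def]
    match_scalars
    field_simp
  have hac : a - c = d • ((1 - lam) • x + lam • y) := by
    rw [smul_add, hx_s, hy_s, sub_eq_add_neg]
  have hd'ac : d' = ‖a - c‖ := by
    rw [hd'_def, norm_sub_rev, ha_def, hc_def]
    congr 1
    abel
  -- key estimate for each admissible ε'
  have hkey : ∀ ε' : ℝ, 0 < ε' → ε' ≤ min 2 t → η ε' ≤ (d - d') / (2 * μ * d) := by
    intro ε' h1 h2
    have h2' : ε' ≤ 2 := h2.trans (min_le_left _ _)
    have h2t : ε' ≤ ‖x - y‖ := by rw [hnormxy]; exact h2.trans (min_le_right _ _)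
    have hmid := hη_mod ε' h1 h2' x y hx1 hy1 h2t
    have hηpos := (hη_range ε' h1 h2').1
    have hxy2 : ‖x + y‖ ≤ 2 * (1 - η ε') := by linarith
    have hcomb : ‖(1 - lam) • x + lam • y‖ ≤ 1 - 2 * μ * η ε' := by
      rcases le_or_gt lam (1 / 2) with hl | hl
      · have heq : (1 - lam) • x + lam • y = lam • (x + y) + (1 - 2 * lam) • x := by module
        rw [heq]
        calc ‖lam • (x + y) + (1 - 2 * lam) • x‖
            ≤ lam * ‖x + y‖ + (1 - 2 * lam) * ‖x‖ := by
              refine (norm_add_le _ _).trans ?_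
              rw [norm_smul, norm_smul, Real.norm_eq_abs, Real.norm_eq_abs,
                abs_of_nonneg hlam0, abs_of_nonneg (by linarith)]
          _ ≤ lam * (2 * (1 - η ε')) + (1 - 2 * lam) * 1 := by
              have := mul_le_mul_of_nonneg_left hxy2 hlam0
              have := mul_le_mul_of_nonneg_left hx1 (by linarith : (0:ℝ) ≤ 1 - 2 * lam)
              linarith
          _ ≤ 1 - 2 * μ * η ε' := by
              rw [hμ_def]
              nlinarith [mul_nonneg (mul_nonneg hlam0 hlam0) (le_of_lt hηpos)]
      · have heq : (1 - lam) • x + lam • y = (1 - lam) • (x + y) + (2 * lam - 1) • y := by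
          module
        rw [heq]
        calc ‖(1 - lam) • (x + y) + (2 * lam - 1) • y‖
            ≤ (1 - lam) * ‖x + y‖ + (2 * lam - 1) * ‖y‖ := by
              refine (norm_add_le _ _).trans ?_
              rw [norm_smul, norm_smul, Real.norm_eq_abs, Real.norm_eq_abs,
                abs_of_nonneg (by linarith), abs_of_nonneg (by linarith)]
          _ ≤ (1 - lam) * (2 * (1 - η ε')) + (2 * lam - 1) * 1 := by
              have := mul_le_mul_of_nonneg_left hxy2 (by linarith : (0:ℝ) ≤ 1 - lam)
              have := mul_le_mul_of_nonneg_left hy1 (by linarith : (0:ℝ) ≤ 2 * lam - 1)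
              linarith
          _ ≤ 1 - 2 * μ * η ε' := by
              rw [hμ_def]
              nlinarith [mul_nonneg (mul_nonneg (by linarith : (0:ℝ) ≤ 1 - lam)
                (by linarith : (0:ℝ) ≤ 1 - lam)) (le_of_lt hηpos)]
    have hd'le : d' ≤ d * (1 - 2 * μ * η ε') := by
      rw [hd'ac, hac, norm_smul, Real.norm_eq_abs, abs_of_pos hd_pos]
      exact mul_le_mul_of_nonneg_left hcomb hd0
    rw [le_div_iff₀ h2μd]
    nlinarith
  -- so 2 μ d · η₁(t) ≤ d - d'
  have hsup : eta1 η t ≤ (d - d') / (2 * μ * d) := by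
    unfold eta1
    rw [if_pos ht_pos]
    apply Real.sSup_le
    · rintro y' ⟨ε', h1, h2, rfl⟩
      exact hkey ε' h1 h2
    · exact div_nonneg (by linarith) h2μd.le
  have hsup2 : 2 * μ * d * eta1 η t ≤ d - d' := by
    have h := (le_div_iff₀ h2μd).mp hsup
    linarith [h]
  -- integral estimate
  set s := 4 * ‖w‖ / b with hs_def
  clear_value s
  have hs_pos : 0 < s := by rw [hs_def]; positivity
  have hdb : d ≤ b := by
    rw [hd_def]
    have h1 : ‖x₁‖ ≤ b / 2 := hCb x₁ hx₁
    have h2 : ‖x₂‖ ≤ b / 2 := hCb x₂ hx₂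
    calc ‖x₁ - x₂‖ ≤ ‖x₁‖ + ‖x₂‖ := norm_sub_le _ _
      _ ≤ b := by linarith
  have hμ4 : μ ≤ 1 / 4 := by
    rw [hμ_def]
    nlinarith [sq_nonneg (2 * lam - 1)]
  have h4 : μ * d ≤ b / 4 := by
    nlinarith [mul_le_mul hμ4 hdb hd0 (by norm_num : (0:ℝ) ≤ 1 / 4)]
  have hst : s ≤ t := by
    rw [hs_def, ht_def, div_le_div_iff₀ hb hμd_pos]
    have := mul_le_mul_of_nonneg_left h4 (norm_nonneg w)
    nlinarith [this]
  have h_eta1_t_nonneg : 0 ≤ eta1 η t := eta1_nonneg η hη_range t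
  have hintle : (∫ u in (0:ℝ)..s, eta1 η u) ≤ s * eta1 η t := by
    have hint1 : IntervalIntegrable (eta1 η) MeasureTheory.volume 0 s :=
      (eta1_mono η hη_range).intervalIntegrable
    have hint2 : IntervalIntegrable (fun _ : ℝ => eta1 η t) MeasureTheory.volume 0 s :=
      intervalIntegrable_const
    have := intervalIntegral.integral_mono_on (le_of_lt hs_pos) hint1 hint2
      (fun u hu => eta1_mono η hη_range (hu.2.trans hst))
    simpa using this
  have hgamma : gammaFun η b ‖w‖ = (b / 4) * ∫ u in (0:ℝ)..s, eta1 η u := by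
    unfold gammaFun etaTilde
    rw [← hs_def]
    ring
  rw [hgamma]
  have hfinal1 : (b / 4) * (∫ u in (0:ℝ)..s, eta1 η u) ≤ (b / 4) * (s * eta1 η t) :=
    mul_le_mul_of_nonneg_left hintle (by positivity)
  have hfinal2 : (b / 4) * (s * eta1 η t) = ‖w‖ * eta1 η t := by
    rw [hs_def]; field_simp
  have hfinal3 : ‖w‖ * eta1 η t ≤ 2 * μ * d * eta1 η t := by
    apply mul_le_mul_of_nonneg_right _ h_eta1_t_nonneg
    linarith [hw_le]
  linarith
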